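/- (Proposition 1, general case.) Let departure times d₁ < d₂ < ... < d_H in {a,...,T}, demands L^{d_k} > 0, base load ℓ⁰ on slots {a,...,T}, and f convex increasing differentiable. Define recursively ℓ^{d_k} as the water-filling solution for demand L^{d_k} on slots {a,...,d_k} against the base load ℓ⁰ + ∑_{j<k} ℓ^{d_j}. Then the collection (ℓ^{d_k})_{k=1}^H minimizes ∑_{t=a}^T f(ℓ⁰_t + ∑_k ℓ^{d_k}_t) over all collections of profiles where each ℓ^{d_k} is nonnegative, supported on {a,...,d_k}, and sums to L^{d_k}. -/

import Mathlib

/-!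
At the optimum of a single class, moving a little load from a slot it uses to any other slot of
its window cannot help, so the marginal cost `f'` of the slots it uses is minimal on its window.
Since the windows are nested and later classes only add load, this survives to the final load:
look at the last class using a slot `s`; its window contains the window of every earlier class
using `s`, and the final load at `s` is the load this class left there. These are exactly the
first-order (KKT) conditions of the joint problem, which are sufficient because `f` is convex:
summing the tangent inequality `f y ≥ f x + f' x (y - x)` over all slots gives the claim.
-/

open Finset

lemma HasDerivAt.nonneg_of_forall_le_right {φ : ℝ → ℝ} {φ' x c : ℝ} (h : HasDerivAt φ φ' x)
    (hc : 0 < c) (hle : ∀ y ∈ Set.Ioc x (x + c), φ x ≤ φ y) : 0 ≤ φ' := by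
  refine ge_of_tendsto
    ((hasDerivWithinAt_iff_tendsto_slope' Set.self_notMem_Ioi).mp h.hasDerivWithinAt) ?_
  filter_upwards [Ioc_mem_nhdsGT (lt_add_of_pos_right x hc)] with y hy
  rw [slope_def_field]
  exact div_nonneg (sub_nonneg.2 (hle y hy)) (sub_nonneg.2 hy.1.le)

lemma deriv_le_deriv_of_forall_add_le_add {f : ℝ → ℝ} {A B c : ℝ} (hA : DifferentiableAt ℝ f A)
    (hB : DifferentiableAt ℝ f B) (hc : 0 < c)
    (h : ∀ ε ∈ Set.Ioc 0 c, f A + f B ≤ f (A - ε) + f (B + ε)) :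
    deriv f A ≤ deriv f B := by
  have hφ : HasDerivAt (fun ε ↦ f (A - ε) + f (B + ε)) (-deriv f A + deriv f B) 0 :=
    (HasDerivAt.comp_const_sub A 0 (by simpa using hA.hasDerivAt)).add
      (HasDerivAt.comp_const_add B 0 (by simpa using hB.hasDerivAt))
  have := hφ.nonneg_of_forall_le_right hc (by simpa using h)
  linarith

lemma ConvexOn.deriv_mul_sub_le {S : Set ℝ} {f : ℝ → ℝ} {x y : ℝ} (hf : ConvexOn ℝ S f)
    (hx : x ∈ S) (hy : y ∈ S) (hd : DifferentiableAt ℝ f x) :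
    deriv f x * (y - x) ≤ f y - f x := by
  rcases lt_trichotomy x y with hxy | rfl | hxy
  · have := hf.deriv_le_slope hx hy hxy hd
    rwa [slope_def_field, le_div_iff₀ (sub_pos.2 hxy)] at this
  · simp
  · have := hf.slope_le_deriv hy hx hxy hd
    rw [slope_def_field, div_le_iff₀ (sub_pos.2 hxy)] at this
    linarith

lemma Finset.sum_mul_sub_nonneg_of_forall_le {α : Type*} {U : Finset α} {g x y : α → ℝ}
    (hx : ∀ t ∈ U, 0 ≤ x t) (hy : ∀ t ∈ U, 0 ≤ y t) (hxy : ∑ t ∈ U, x t = ∑ t ∈ U, y t)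
    (hg : ∀ s ∈ U, 0 < x s → ∀ t ∈ U, g s ≤ g t) :
    0 ≤ ∑ t ∈ U, g t * (y t - x t) := by
  rcases U.eq_empty_or_nonempty with rfl | hU
  · simp
  obtain ⟨t₀, ht₀, hmin⟩ := U.exists_min_image g hU
  have hx_eq : ∀ t ∈ U, g t * x t = g t₀ * x t := by
    intro t ht
    rcases (hx t ht).eq_or_lt with h | h
    · simp [← h]
    · rw [le_antisymm (hg t ht h t₀ ht₀) (hmin t ht)]
  calc 0 = g t₀ * (∑ t ∈ U, y t - ∑ t ∈ U, x t) := by rw [hxy, sub_self, mul_zero]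
    _ = ∑ t ∈ U, (g t₀ * y t - g t₀ * x t) := by rw [mul_sub, mul_sum, mul_sum, sum_sub_distrib]
    _ ≤ ∑ t ∈ U, g t * (y t - x t) := sum_le_sum fun t ht ↦ by
        rw [mul_sub, hx_eq t ht]
        nlinarith [hmin t ht, hy t ht]

lemma Finset.sum_filter_lt_add {ι M : Type*} [Fintype ι] [LinearOrder ι] [AddCommMonoid M]
    (c : ι → M) (j : ι) :
    ∑ i with i < j, c i + c j = ∑ i with i ≤ j, c i := by
  have : univ.filter (· ≤ j) = insert j (univ.filter (· < j)) := by
    ext i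
    simp [le_iff_lt_or_eq, or_comm]
  rw [this, sum_insert (by simp), add_comm]

section WaterFilling

variable {ι α : Type*}

def IsAdmissible (U : Finset α) (L : ℝ) (x : α → ℝ) : Prop :=
  (∀ t, 0 ≤ x t) ∧ (∀ t ∉ U, x t = 0) ∧ ∑ t ∈ U, x t = L

/-- Water filling is characterised by its optimality, not by the water-level algorithm computing
it. -/
def IsWaterFilling (f : ℝ → ℝ) (U : Finset α) (b : α → ℝ) (L : ℝ) (x : α → ℝ) : Prop :=
  IsAdmissible U L x ∧
    ∀ y, IsAdmissible U L y → ∑ t ∈ U, f (b t + x t) ≤ ∑ t ∈ U, f (b t + y t)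

theorem IsWaterFilling.deriv_le {f : ℝ → ℝ} {U : Finset α} {b x : α → ℝ} {L : ℝ}
    (hw : IsWaterFilling f U b L x) (hf : Differentiable ℝ f) {s t : α} (hs : s ∈ U)
    (hxs : 0 < x s) (ht : t ∈ U) : deriv f (b s + x s) ≤ deriv f (b t + x t) := by
  classical
  obtain ⟨⟨hx0, hxU, hxL⟩, hopt⟩ := hw
  rcases eq_or_ne s t with rfl | hst
  · exact le_rfl
  refine deriv_le_deriv_of_forall_add_le_add (hf _) (hf _) hxs fun ε ⟨hε, hεs⟩ ↦ ?_
  set y : α → ℝ := fun r ↦ x r + (if r = t then ε else 0) - (if r = s then ε else 0)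
  have hy : IsAdmissible U L y := by
    refine ⟨fun r ↦ ?_, fun r hr ↦ ?_, ?_⟩
    · simp only [y]
      split_ifs <;> subst_vars <;> linarith [hx0 r]
    · have hrs : r ≠ s := fun h ↦ hr (h ▸ hs)
      have hrt : r ≠ t := fun h ↦ hr (h ▸ ht)
      simp [y, hrs, hrt, hxU r hr]
    · simp only [y, sum_sub_distrib, sum_add_distrib, sum_ite_eq', if_pos hs, if_pos ht, hxL]
      ring
  have hcost := sub_nonneg.2 (hopt y hy)
  rw [← sum_sub_distrib, sum_eq_add_of_mem s t hs ht hst fun r _ hr ↦ by simp [y, hr.1, hr.2]]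
    at hcost
  simp only [y, if_neg hst, if_neg hst.symm, if_pos, add_zero, sub_zero, ← add_sub_assoc,
    ← add_assoc] at hcost
  linarith

theorem IsWaterFilling.deriv_total_le [Fintype ι] [LinearOrder ι] {f : ℝ → ℝ}
    (hf : Differentiable ℝ f) (hf' : Monotone (deriv f)) {U : ι → Finset α} (hU : Monotone U)
    {b : α → ℝ} {L : ι → ℝ} {ℓ : ι → α → ℝ}
    (hw : ∀ k, IsWaterFilling f (U k) (fun t ↦ b t + ∑ j with j < k, ℓ j t) (L k) (ℓ k))
    {k : ι} {s t : α} (hs : 0 < ℓ k s) (ht : t ∈ U k) :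
    deriv f (b s + ∑ j, ℓ j s) ≤ deriv f (b t + ∑ j, ℓ j t) := by
  have hℓ0 : ∀ i r, 0 ≤ ℓ i r := fun i ↦ (hw i).1.1
  have hsU : s ∈ U k := by
    by_contra h
    exact hs.ne' ((hw k).1.2.1 s h)
  set J : Finset ι := univ.filter fun i ↦ 0 < ℓ i s
  have hkJ : k ∈ J := by simpa [J] using hs
  set j := J.max' ⟨k, hkJ⟩
  have hkj : k ≤ j := J.le_max' k hkJ
  have hjs : 0 < ℓ j s := by simpa [J] using J.max'_mem ⟨k, hkJ⟩
  have hlast : ∀ i, ℓ i s ≠ 0 → i ≤ j := fun i hi ↦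
    J.le_max' i (by simpa [J] using (hℓ0 i s).lt_of_ne' hi)
  have hs_total : b s + ∑ i, ℓ i s = (b s + ∑ i with i < j, ℓ i s) + ℓ j s := by
    rw [add_assoc, sum_filter_lt_add, sum_filter_of_ne fun i _ ↦ hlast i]
  have ht_total : (b t + ∑ i with i < j, ℓ i t) + ℓ j t ≤ b t + ∑ i, ℓ i t := by
    rw [add_assoc, sum_filter_lt_add]
    linarith [sum_le_univ_sum_of_nonneg (s := univ.filter (· ≤ j)) fun i ↦ hℓ0 i t]
  calc deriv f (b s + ∑ i, ℓ i s) = deriv f ((b s + ∑ i with i < j, ℓ i s) + ℓ j s) := by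
        rw [hs_total]
    _ ≤ deriv f ((b t + ∑ i with i < j, ℓ i t) + ℓ j t) :=
        (hw j).deriv_le hf (hU hkj hsU) hjs (hU hkj ht)
    _ ≤ deriv f (b t + ∑ i, ℓ i t) := hf' ht_total

theorem sum_le_sum_of_forall_deriv_le [Fintype ι] {f : ℝ → ℝ} (hf : ConvexOn ℝ Set.univ f)
    (hd : Differentiable ℝ f) {U : ι → Finset α} {V : Finset α} (hUV : ∀ k, U k ⊆ V)
    {b : α → ℝ} {L : ι → ℝ} {ℓ m : ι → α → ℝ} (hℓ : ∀ k, IsAdmissible (U k) (L k) (ℓ k))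
    (hm : ∀ k, IsAdmissible (U k) (L k) (m k))
    (hkkt : ∀ k s t, 0 < ℓ k s → t ∈ U k →
      deriv f (b s + ∑ j, ℓ j s) ≤ deriv f (b t + ∑ j, ℓ j t)) :
    ∑ t ∈ V, f (b t + ∑ k, ℓ k t) ≤ ∑ t ∈ V, f (b t + ∑ k, m k t) := by
  set g : α → ℝ := fun t ↦ deriv f (b t + ∑ k, ℓ k t)
  have hclass : ∀ k, 0 ≤ ∑ t ∈ V, g t * (m k t - ℓ k t) := by
    intro k
    rw [← sum_subset (hUV k) fun t _ ht ↦ by rw [(hm k).2.1 t ht, (hℓ k).2.1 t ht, sub_zero,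
      mul_zero]]
    exact sum_mul_sub_nonneg_of_forall_le (fun t _ ↦ (hℓ k).1 t) (fun t _ ↦ (hm k).1 t)
      ((hℓ k).2.2.trans (hm k).2.2.symm) fun s _ hs t ht ↦ hkkt k s t hs ht
  calc ∑ t ∈ V, f (b t + ∑ k, ℓ k t)
      ≤ ∑ t ∈ V, f (b t + ∑ k, ℓ k t) + ∑ k, ∑ t ∈ V, g t * (m k t - ℓ k t) :=
        le_add_of_nonneg_right (sum_nonneg fun k _ ↦ hclass k)
    _ = ∑ t ∈ V, (f (b t + ∑ k, ℓ k t) +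
          g t * ((b t + ∑ k, m k t) - (b t + ∑ k, ℓ k t))) := by
        rw [sum_comm, ← sum_add_distrib]
        refine sum_congr rfl fun t _ ↦ ?_
        rw [← mul_sum, sum_sub_distrib]
        ring
    _ ≤ ∑ t ∈ V, f (b t + ∑ k, m k t) := sum_le_sum fun t _ ↦ by
        linarith [hf.deriv_mul_sub_le (Set.mem_univ (b t + ∑ k, ℓ k t))
          (Set.mem_univ (b t + ∑ k, m k t)) (hd _)]

end WaterFilling

theorem stmt7_general (a T H : ℕ)
    (d : Fin H → ℕ) (hd_mono : StrictMono d)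
    (hd_ub : ∀ k, d k ≤ T)
    (f : ℝ → ℝ) (hf_conv : ConvexOn ℝ Set.univ f)
    (hf_diff : Differentiable ℝ f)
    (ℓ0 : ℕ → ℝ) (L : Fin H → ℝ)
    (ℓ : Fin H → ℕ → ℝ)
    (hpos : ∀ k t, 0 ≤ ℓ k t)
    (hsupp : ∀ k t, t ∉ Finset.Icc a (d k) → ℓ k t = 0)
    (hsum : ∀ k, ∑ t ∈ Finset.Icc a (d k), ℓ k t = L k)
    (hopt : ∀ k : Fin H, ∀ x : ℕ → ℝ,
      (∀ t, 0 ≤ x t) → (∀ t, t ∉ Finset.Icc a (d k) → x t = 0) →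
      (∑ t ∈ Finset.Icc a (d k), x t = L k) →
      ∑ t ∈ Finset.Icc a (d k),
          f (ℓ0 t + (∑ j ∈ Finset.univ.filter (fun j => j < k), ℓ j t) + ℓ k t) ≤
        ∑ t ∈ Finset.Icc a (d k),
          f (ℓ0 t + (∑ j ∈ Finset.univ.filter (fun j => j < k), ℓ j t) + x t)) :
    ∀ m : Fin H → ℕ → ℝ,
      (∀ k t, 0 ≤ m k t) →
      (∀ k t, t ∉ Finset.Icc a (d k) → m k t = 0) →
      (∀ k, ∑ t ∈ Finset.Icc a (d k), m k t = L k) →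
      ∑ t ∈ Finset.Icc a T, f (ℓ0 t + ∑ k, ℓ k t) ≤
        ∑ t ∈ Finset.Icc a T, f (ℓ0 t + ∑ k, m k t) := by
  intro m hm_nonneg hm_supp hm_sum
  have hw : ∀ k, IsWaterFilling f (Icc a (d k)) (fun t ↦ ℓ0 t + ∑ j with j < k, ℓ j t) (L k)
      (ℓ k) := fun k ↦
    ⟨⟨hpos k, hsupp k, hsum k⟩, fun x ⟨hx0, hxU, hxL⟩ ↦ hopt k x hx0 hxU hxL⟩
  have hf' : Monotone (deriv f) :=
    monotoneOn_univ.1 (hf_conv.monotoneOn_deriv fun x _ ↦ hf_diff x)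
  refine sum_le_sum_of_forall_deriv_le hf_conv hf_diff (fun k ↦ Icc_subset_Icc_right (hd_ub k))
    (fun k ↦ (hw k).1) (fun k ↦ ⟨hm_nonneg k, hm_supp k, hm_sum k⟩) fun k s t hs ht ↦ ?_
  exact IsWaterFilling.deriv_total_le hf_diff hf'
    (fun _ _ hij ↦ Icc_subset_Icc_right (hd_mono.monotone hij)) hw hs ht

/-- Proposition 1, general case: sequential water filling ordered by departure
time solves the nested multi-class scheduling problem. -/
theorem stmt7 (a T H : ℕ) (ha : 1 ≤ a)
    (d : Fin H → ℕ) (hd_mono : StrictMono d)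
    (hd_lb : ∀ k, a ≤ d k) (hd_ub : ∀ k, d k ≤ T)
    (f : ℝ → ℝ) (hf_mono : StrictMono f) (hf_conv : ConvexOn ℝ Set.univ f)
    (hf_diff : Differentiable ℝ f)
    (ℓ0 : ℕ → ℝ) (L : Fin H → ℝ) (hL : ∀ k, 0 < L k)
    (ℓ : Fin H → ℕ → ℝ)
    (hpos : ∀ k t, 0 ≤ ℓ k t)
    (hsupp : ∀ k t, t ∉ Finset.Icc a (d k) → ℓ k t = 0)
    (hsum : ∀ k, ∑ t ∈ Finset.Icc a (d k), ℓ k t = L k)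
    (hopt : ∀ k : Fin H, ∀ x : ℕ → ℝ,
      (∀ t, 0 ≤ x t) → (∀ t, t ∉ Finset.Icc a (d k) → x t = 0) →
      (∑ t ∈ Finset.Icc a (d k), x t = L k) →
      ∑ t ∈ Finset.Icc a (d k),
          f (ℓ0 t + (∑ j ∈ Finset.univ.filter (fun j => j < k), ℓ j t) + ℓ k t) ≤
        ∑ t ∈ Finset.Icc a (d k),
          f (ℓ0 t + (∑ j ∈ Finset.univ.filter (fun j => j < k), ℓ j t) + x t)) :
    ∀ m : Fin H → ℕ → ℝ,
      (∀ k t, 0 ≤ m k t) →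
      (∀ k t, t ∉ Finset.Icc a (d k) → m k t = 0) →
      (∀ k, ∑ t ∈ Finset.Icc a (d k), m k t = L k) →
      ∑ t ∈ Finset.Icc a T, f (ℓ0 t + ∑ k, ℓ k t) ≤
        ∑ t ∈ Finset.Icc a T, f (ℓ0 t + ∑ k, m k t) :=
  stmt7_general a T H d hd_mono hd_ub f hf_conv hf_diff ℓ0 L ℓ hpos hsupp hsum hopt
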